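/- If an EPCF program M weak-head reduces in finitely many steps to a numeral n, then its collapse M↓ multistep PCF-reduces to n: M ↠wh n implies M↓ ↠PCF n. -/

import Mathlib

inductive Tm : Type
  | var : String → Tm
  | app : Tm → Tm → Tm
  | lam : String → Tm → Tm
  | fixp : Tm → Tm
  | esub : Tm → String → Tm → Tm
  | zero : Tm
  | pred : Tm → Tm
  | succ : Tm → Tm
  | ifz : Tm → Tm → Tm → Tm

/-- Numerals `n̲ = succⁿ 0`. -/
def numeral : ℕ → Tm
  | 0 => Tm.zero
  | n + 1 => Tm.succ (numeral n)

/-- Free variables of an EPCF term. -/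
def fv : Tm → Finset String
  | .var x => {x}
  | .app M N => fv M ∪ fv N
  | .lam x M => fv M \ {x}
  | .fixp M => fv M
  | .esub M x N => (fv M \ {x}) ∪ fv N
  | .zero => ∅
  | .pred M => fv M
  | .succ M => fv M
  | .ifz L M N => fv L ∪ fv M ∪ fv N

/-- Substitution `M[x := Q]` (capture-free whenever `Q` is closed, which is
the only situation in which it is used for programs). -/
def subst (x : String) (Q : Tm) : Tm → Tm
  | .var y => if y = x then Q else .var y
  | .app M N => .app (subst x Q M) (subst x Q N)
  | .lam y M => if y = x then .lam y M else .lam y (subst x Q M)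
  | .fixp M => .fixp (subst x Q M)
  | .esub M y N =>
      if y = x then .esub M y (subst x Q N)
      else .esub (subst x Q M) y (subst x Q N)
  | .zero => .zero
  | .pred M => .pred (subst x Q M)
  | .succ M => .succ (subst x Q M)
  | .ifz L M N => .ifz (subst x Q L) (subst x Q M) (subst x Q N)

/-- PCF terms are the EPCF terms without explicit substitutions. -/
def IsPCF : Tm → Prop
  | .var _ => True
  | .app M N => IsPCF M ∧ IsPCF N
  | .lam _ M => IsPCF M
  | .fixp M => IsPCF M
  | .esub _ _ _ => False
  | .zero => True
  | .pred M => IsPCF M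
  | .succ M => IsPCF M
  | .ifz L M N => IsPCF L ∧ IsPCF M ∧ IsPCF N

/-- All explicit substitutions occurring in the term have closed right-hand sides. -/
def closedSubs : Tm → Prop
  | .var _ => True
  | .app M N => closedSubs M ∧ closedSubs N
  | .lam _ M => closedSubs M
  | .fixp M => closedSubs M
  | .esub M _ N => closedSubs M ∧ closedSubs N ∧ fv N = ∅
  | .zero => True
  | .pred M => closedSubs M
  | .succ M => closedSubs M
  | .ifz L M N => closedSubs L ∧ closedSubs M ∧ closedSubs N

/-- An EPCF program: closed, and all explicit substitutions have closed bodies. -/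
def IsProgram (M : Tm) : Prop := fv M = ∅ ∧ closedSubs M

/-- The collapse `M↓`, performing all explicit substitutions. -/
def collapse : Tm → Tm
  | .var x => .var x
  | .app M N => .app (collapse M) (collapse N)
  | .lam x M => .lam x (collapse M)
  | .fixp M => .fixp (collapse M)
  | .esub M x N => subst x (collapse N) (collapse M)
  | .zero => .zero
  | .pred M => .pred (collapse M)
  | .succ M => .succ (collapse M)
  | .ifz L M N => .ifz (collapse L) (collapse M) (collapse N)

/-- Lists of explicit substitutions `σ = ⟨N₁/x₁⟩⋯⟨Nₙ/xₙ⟩`. -/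
abbrev Subs := List (String × Tm)

/-- `M^σ`: the term `M` under the list of explicit substitutions `σ`. -/
def applySubs (M : Tm) : Subs → Tm
  | [] => M
  | (x, N) :: σ => applySubs (.esub M x N) σ

def lookupS (x : String) : Subs → Option Tm
  | [] => none
  | (y, N) :: σ => if x = y then some N else lookupS x σ

/-- The variables in `σ` are pairwise distinct. -/
def keysDistinct (σ : Subs) : Prop := (σ.map Prod.fst).Nodup

/-- Computation redexes of EPCF. -/
inductive CrRedex : Tm → Tm → Prop
  | beta (x : String) (M N : Tm) (σ : Subs) (hk : keysDistinct σ) :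
      CrRedex (.app (applySubs (.lam x M) σ) N) (.esub (applySubs M σ) x N)
  | pred_zero : CrRedex (.pred .zero) .zero
  | pred_succ (n : ℕ) : CrRedex (.pred (numeral (n + 1))) (numeral n)
  | ifz_zero (M N : Tm) : CrRedex (.ifz .zero M N) M
  | ifz_succ (n : ℕ) (M N : Tm) : CrRedex (.ifz (numeral (n + 1)) M N) N
  | fix_unfold (M : Tm) : CrRedex (.fixp M) (.app M (.fixp M))

/-- Percolation redexes of EPCF (the list `σ` is non-empty). -/
inductive PrRedex : Tm → Tm → Prop
  | var_hit (x : String) (N : Tm) (σ : Subs) (hne : σ ≠ []) (hk : keysDistinct σ)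
      (h : lookupS x σ = some N) : PrRedex (applySubs (.var x) σ) N
  | var_miss (x : String) (σ : Subs) (hne : σ ≠ []) (hk : keysDistinct σ)
      (h : lookupS x σ = none) : PrRedex (applySubs (.var x) σ) (.var x)
  | zeroS (σ : Subs) (hne : σ ≠ []) (hk : keysDistinct σ) :
      PrRedex (applySubs .zero σ) .zero
  | appS (M N : Tm) (σ : Subs) (hne : σ ≠ []) (hk : keysDistinct σ) :
      PrRedex (applySubs (.app M N) σ) (.app (applySubs M σ) (applySubs N σ))
  | predS (M : Tm) (σ : Subs) (hne : σ ≠ []) (hk : keysDistinct σ) :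
      PrRedex (applySubs (.pred M) σ) (.pred (applySubs M σ))
  | succS (M : Tm) (σ : Subs) (hne : σ ≠ []) (hk : keysDistinct σ) :
      PrRedex (applySubs (.succ M) σ) (.succ (applySubs M σ))
  | ifzS (L M N : Tm) (σ : Subs) (hne : σ ≠ []) (hk : keysDistinct σ) :
      PrRedex (applySubs (.ifz L M N) σ)
        (.ifz (applySubs L σ) (applySubs M σ) (applySubs N σ))
  | fixS (M : Tm) (σ : Subs) (hne : σ ≠ []) (hk : keysDistinct σ) :
      PrRedex (applySubs (.fixp M) σ) (.fixp (applySubs M σ))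

/-- Evaluation contexts `E ::= □ | E·P | pred E | succ E | ifz E P Q`. -/
inductive ECtx : Type
  | hole : ECtx
  | appL : ECtx → Tm → ECtx
  | pred : ECtx → ECtx
  | succ : ECtx → ECtx
  | ifz : ECtx → Tm → Tm → ECtx

def fill : ECtx → Tm → Tm
  | .hole, M => M
  | .appL E P, M => .app (fill E M) P
  | .pred E, M => .pred (fill E M)
  | .succ E, M => .succ (fill E M)
  | .ifz E P Q, M => .ifz (fill E M) P Q

/-- One computation reduction step (under an evaluation context). -/
def CrStep (M N : Tm) : Prop :=
  ∃ E A B, CrRedex A B ∧ M = fill E A ∧ N = fill E B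

/-- One percolation reduction step (under an evaluation context). -/
def PrStep (M N : Tm) : Prop :=
  ∃ E A B, PrRedex A B ∧ M = fill E A ∧ N = fill E B

/-- One weak head reduction step. -/
def WhStep (M N : Tm) : Prop := CrStep M N ∨ PrStep M N

/-- Multistep weak head reduction. -/
def WhSteps : Tm → Tm → Prop := Relation.ReflTransGen WhStep

/-- PCF weak head redexes. -/
inductive PcfRedex : Tm → Tm → Prop
  | beta (x : String) (P Q : Tm) : PcfRedex (.app (.lam x P) Q) (subst x Q P)
  | fix_unfold (P : Tm) : PcfRedex (.fixp P) (.app P (.fixp P))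
  | pred_zero : PcfRedex (.pred .zero) .zero
  | pred_succ (n : ℕ) : PcfRedex (.pred (numeral (n + 1))) (numeral n)
  | ifz_zero (P Q : Tm) : PcfRedex (.ifz .zero P Q) P
  | ifz_succ (n : ℕ) (P Q : Tm) : PcfRedex (.ifz (numeral (n + 1)) P Q) Q

/-- One PCF weak head reduction step. -/
def PcfStep (M N : Tm) : Prop :=
  ∃ E A B, PcfRedex A B ∧ M = fill E A ∧ N = fill E B

/-- Multistep PCF weak head reduction. -/
def PcfSteps : Tm → Tm → Prop := Relation.ReflTransGen PcfStep

/-!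
Induction on the reduction `M ↠wh n`, carrying the invariant that `M` is a program, which weak
head steps preserve. A percolation step does not change the collapse, and a computation step
collapses to a PCF step, with one exception: a β-step `(λx.P)^σ Q → P^σ⟨Q/x⟩` where `σ` already
binds `x`. Collapsing `(λx.P)^σ` leaves `x` bound, so the collapse of the result substitutes the
value `σ` gives `x`, where the PCF β-step substitutes `Q`. But the result carries at its head a
substitution list binding `x` twice, so it is stuck without being a numeral: this step never
occurs in a reduction to a numeral.
-/

theorem fv_numeral : ∀ n, fv (numeral n) = ∅
  | 0 => rfl
  | n + 1 => fv_numeral n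

theorem closedSubs_numeral : ∀ n, closedSubs (numeral n)
  | 0 => trivial
  | n + 1 => closedSubs_numeral n

theorem collapse_numeral : ∀ n, collapse (numeral n) = numeral n
  | 0 => rfl
  | n + 1 => congrArg Tm.succ (collapse_numeral n)

theorem subst_of_notMem_fv {x : String} (Q : Tm) {T : Tm} (h : x ∉ fv T) :
    subst x Q T = T := by
  induction T with
  | var y => simp_all [fv, subst, eq_comm]
  | lam y M ih | esub M y N ih _ => grind [fv, subst]
  | _ => simp_all [fv, subst]

theorem fv_subst_subset (x : String) (Q T : Tm) :
    fv (subst x Q T) ⊆ (fv T \ {x}) ∪ fv Q := by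
  induction T with
  | var y => by_cases hxy : y = x <;> simp [fv, subst, hxy]
  | _ => simp_all only [Finset.subset_iff]; grind [fv, subst]

theorem fv_collapse_subset {T : Tm} (h : closedSubs T) : fv (collapse T) ⊆ fv T := by
  induction T with
  | esub M y N ihM ihN =>
    refine (fv_subst_subset y _ _).trans ?_
    simp only [fv, h.2.2, Finset.subset_empty.mp (h.2.2 ▸ ihN h.2.1)]
    exact Finset.union_subset_union (Finset.sdiff_subset_sdiff (ihM h.1) le_rfl) le_rfl
  | var | zero => exact subset_rfl
  | fixp _ ih | pred _ ih | succ _ ih => exact ih h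
  | _ => simp only [closedSubs] at h; simp only [collapse, fv]; gcongr <;> simp_all

theorem IsProgram.fv_collapse {T : Tm} (h : IsProgram T) : fv (collapse T) = ∅ :=
  Finset.subset_empty.mp (h.1 ▸ fv_collapse_subset h.2)

theorem closedSubs_applySubs {T : Tm} {σ : Subs} :
    closedSubs (applySubs T σ) ↔ closedSubs T ∧ ∀ p ∈ σ, IsProgram p.2 := by
  induction σ generalizing T with
  | nil => simp [applySubs]
  | cons p σ ih => simp only [applySubs, ih, closedSubs, IsProgram, List.forall_mem_cons]; tauto

theorem fv_applySubs {T : Tm} {σ : Subs} (hσ : ∀ p ∈ σ, IsProgram p.2) :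
    fv (applySubs T σ) = fv T \ (σ.map Prod.fst).toFinset := by
  induction σ generalizing T with
  | nil => simp [applySubs]
  | cons p σ ih =>
    simp only [List.forall_mem_cons] at hσ
    rw [applySubs, ih hσ.2, fv, hσ.1.1, Finset.union_empty, sdiff_sdiff_left, List.map_cons,
      List.toFinset_cons, Finset.insert_eq, Finset.sup_eq_union]

theorem lookupS_eq_none_iff {x : String} {σ : Subs} :
    lookupS x σ = none ↔ x ∉ σ.map Prod.fst := by
  induction σ with
  | nil => simp [lookupS]
  | cons p σ ih => by_cases hx : x = p.1 <;> simp [lookupS, hx, ih]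

theorem mem_of_lookupS_eq_some {x : String} {N : Tm} {σ : Subs} (h : lookupS x σ = some N) :
    (x, N) ∈ σ := by
  induction σ with
  | nil => simp [lookupS] at h
  | cons p σ ih => obtain ⟨y, P⟩ := p; by_cases hx : x = y <;> simp_all [lookupS]

def substAll : Subs → Tm → Tm
  | [], T => T
  | (y, N) :: σ, T => substAll σ (subst y (collapse N) T)

theorem collapse_applySubs (T : Tm) (σ : Subs) :
    collapse (applySubs T σ) = substAll σ (collapse T) := by
  induction σ generalizing T with
  | nil => rfl
  | cons p σ ih => exact ih _

section substAll

variable (σ : Subs)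

theorem substAll_zero : substAll σ .zero = .zero := by
  induction σ with
  | nil => rfl
  | cons p σ ih => exact ih

theorem substAll_app (P Q : Tm) : substAll σ (.app P Q) = .app (substAll σ P) (substAll σ Q) := by
  induction σ generalizing P Q with
  | nil => rfl
  | cons p σ ih => exact ih _ _

theorem substAll_fixp (P : Tm) : substAll σ (.fixp P) = .fixp (substAll σ P) := by
  induction σ generalizing P with
  | nil => rfl
  | cons p σ ih => exact ih _

theorem substAll_pred (P : Tm) : substAll σ (.pred P) = .pred (substAll σ P) := by
  induction σ generalizing P with
  | nil => rfl
  | cons p σ ih => exact ih _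

theorem substAll_succ (P : Tm) : substAll σ (.succ P) = .succ (substAll σ P) := by
  induction σ generalizing P with
  | nil => rfl
  | cons p σ ih => exact ih _

theorem substAll_ifz (L P Q : Tm) :
    substAll σ (.ifz L P Q) = .ifz (substAll σ L) (substAll σ P) (substAll σ Q) := by
  induction σ generalizing L P Q with
  | nil => rfl
  | cons p σ ih => exact ih _ _ _

theorem substAll_lam {x : String} (hx : x ∉ σ.map Prod.fst) (P : Tm) :
    substAll σ (.lam x P) = .lam x (substAll σ P) := by
  induction σ generalizing P with
  | nil => rfl
  | cons p σ ih =>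
    simp only [List.map_cons, List.mem_cons, not_or] at hx
    simp [substAll, subst, hx.1, ih hx.2]

theorem substAll_of_fv_eq_empty {T : Tm} (hT : fv T = ∅) : substAll σ T = T := by
  induction σ with
  | nil => rfl
  | cons p σ ih => simp [substAll, subst_of_notMem_fv _ (hT ▸ Finset.notMem_empty _), ih]

theorem substAll_var_of_lookupS_eq_none {x : String} (h : lookupS x σ = none) :
    substAll σ (.var x) = .var x := by
  induction σ with
  | nil => rfl
  | cons p σ ih =>
    obtain ⟨y, N⟩ := p
    by_cases hxy : x = y <;> simp_all [lookupS, substAll, subst]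

theorem substAll_var_of_lookupS_eq_some {x : String} {N : Tm} (hσ : ∀ p ∈ σ, IsProgram p.2)
    (h : lookupS x σ = some N) : substAll σ (.var x) = collapse N := by
  induction σ with
  | nil => simp [lookupS] at h
  | cons p σ ih =>
    obtain ⟨y, P⟩ := p
    simp only [List.forall_mem_cons] at hσ
    by_cases hxy : x = y
    · simp only [lookupS, hxy, if_true, Option.some.injEq] at h
      subst h
      simpa [substAll, subst, hxy] using substAll_of_fv_eq_empty σ hσ.1.fv_collapse
    · simp_all [lookupS, substAll, subst]

end substAll

theorem fv_fill (E : ECtx) (A : Tm) : fv (fill E A) = fv (fill E .zero) ∪ fv A := by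
  induction E with
  | hole => simp [fill, fv]
  | pred _ ih | succ _ ih => exact ih
  | appL _ _ ih | ifz _ _ _ ih => simp only [fill, fv, ih, Finset.union_right_comm _ (fv A)]

theorem closedSubs_fill (E : ECtx) (A : Tm) :
    closedSubs (fill E A) ↔ closedSubs (fill E .zero) ∧ closedSubs A := by
  induction E with
  | hole => simp [fill, closedSubs]
  | pred _ ih | succ _ ih => exact ih
  | appL _ _ ih | ifz _ _ _ ih => simp only [fill, closedSubs, ih]; tauto

theorem isProgram_fill (E : ECtx) (A : Tm) :
    IsProgram (fill E A) ↔ IsProgram (fill E .zero) ∧ IsProgram A := by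
  simp only [IsProgram, fv_fill E A, closedSubs_fill E A, Finset.union_eq_empty]
  tauto

def ECtx.collapse : ECtx → ECtx
  | .hole => .hole
  | .appL E P => .appL E.collapse (_root_.collapse P)
  | .pred E => .pred E.collapse
  | .succ E => .succ E.collapse
  | .ifz E P Q => .ifz E.collapse (_root_.collapse P) (_root_.collapse Q)

theorem collapse_fill (E : ECtx) (A : Tm) : collapse (fill E A) = fill E.collapse (collapse A) := by
  induction E with
  | hole => rfl
  | _ => simp_all [fill, collapse, ECtx.collapse]

def spine : Tm → Subs
  | .esub M x N => spine M ++ [(x, N)]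
  | _ => []

theorem applySubs_append_singleton (T : Tm) (σ : Subs) (x : String) (N : Tm) :
    applySubs T (σ ++ [(x, N)]) = .esub (applySubs T σ) x N := by
  induction σ generalizing T with
  | nil => rfl
  | cons p σ ih => exact ih _

theorem spine_applySubs (T : Tm) (σ : Subs) : spine (applySubs T σ) = spine T ++ σ := by
  induction σ using List.reverseRecOn with
  | nil => exact (List.append_nil _).symm
  | append_singleton σ p ih =>
    obtain ⟨x, N⟩ := p
    simp [applySubs_append_singleton, spine, ih]

/-- The explicit substitutions at the head position (the hole of an evaluation context) bind
some variable twice. Percolation requires distinct variables, so such a term never reduces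
again. -/
def HeadClash : Tm → Prop
  | .app M _ => HeadClash M
  | .pred M => HeadClash M
  | .succ M => HeadClash M
  | .ifz L _ _ => HeadClash L
  | .esub M x N => ¬ keysDistinct (spine (.esub M x N))
  | _ => False

theorem headClash_fill (E : ECtx) (A : Tm) : HeadClash (fill E A) ↔ HeadClash A := by
  induction E with
  | hole => rfl
  | appL _ _ ih | pred _ ih | succ _ ih | ifz _ _ _ ih => exact ih

theorem not_headClash_numeral : ∀ n, ¬ HeadClash (numeral n)
  | 0 => id
  | n + 1 => not_headClash_numeral n

theorem headClash_applySubs (T : Tm) {σ : Subs} (hσ : σ ≠ []) :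
    HeadClash (applySubs T σ) ↔ ¬ keysDistinct (spine T ++ σ) := by
  obtain ⟨σ, ⟨x, N⟩, rfl⟩ := (List.eq_nil_or_concat σ).resolve_left hσ
  rw [List.concat_eq_append, applySubs_append_singleton, ← List.append_assoc, ← spine_applySubs]
  rfl

theorem CrRedex.not_headClash {A B : Tm} (h : CrRedex A B) : ¬ HeadClash A := by
  cases h with
  | beta x M N σ hk =>
    show ¬ HeadClash (applySubs (.lam x M) σ)
    rcases eq_or_ne σ [] with rfl | hσ
    · exact id
    · simpa [headClash_applySubs _ hσ, spine] using hk
  | pred_succ n | ifz_succ n => exact not_headClash_numeral (n + 1)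
  | _ => exact id

theorem PrRedex.not_headClash {A B : Tm} (h : PrRedex A B) : ¬ HeadClash A := by
  cases h <;> simpa [headClash_applySubs _ ‹_ ≠ []›, spine]

theorem WhStep.not_headClash {M N : Tm} (h : WhStep M N) : ¬ HeadClash M := by
  rcases h with ⟨E, A, B, hr, rfl, -⟩ | ⟨E, A, B, hr, rfl, -⟩ <;>
    rw [headClash_fill] <;> exact hr.not_headClash

theorem HeadClash.not_whSteps_numeral {M : Tm} (h : HeadClash M) (n : ℕ) :
    ¬ WhSteps M (numeral n) := by
  intro hs
  rcases hs.cases_head with rfl | ⟨N, hstep, -⟩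
  exacts [not_headClash_numeral n h, hstep.not_headClash h]

theorem CrRedex.pcfRedex_collapse_or_headClash {A B : Tm} (h : CrRedex A B) :
    PcfRedex (collapse A) (collapse B) ∨ HeadClash B := by
  cases h with
  | beta x M N σ hk =>
    by_cases hx : x ∈ σ.map Prod.fst
    · right
      intro hB
      rw [keysDistinct, spine, spine_applySubs, List.map_append, List.nodup_append] at hB
      exact hB.2.2 x (by rw [List.map_append]; exact List.mem_append_right _ hx) x
        (List.mem_singleton_self x) rfl
    · left
      simp only [collapse, collapse_applySubs, substAll_lam σ hx]
      exact .beta x _ _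
  | pred_zero => exact .inl .pred_zero
  | pred_succ n => left; simpa [collapse, collapse_numeral] using .pred_succ n
  | ifz_zero M N => exact .inl (.ifz_zero _ _)
  | ifz_succ n M N => left; simpa [collapse, collapse_numeral] using .ifz_succ n _ _
  | fix_unfold M => exact .inl (.fix_unfold _)

theorem PrRedex.collapse_eq {A B : Tm} (h : PrRedex A B) (hA : closedSubs A) :
    collapse A = collapse B := by
  cases h with
  | var_hit x N σ _ _ hx =>
    rw [collapse_applySubs]
    exact substAll_var_of_lookupS_eq_some σ (closedSubs_applySubs.mp hA).2 hx
  | var_miss x σ _ _ hx => rw [collapse_applySubs]; exact substAll_var_of_lookupS_eq_none σ hx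
  | _ => simp [collapse_applySubs, collapse, substAll_zero, substAll_app, substAll_pred,
      substAll_succ, substAll_ifz, substAll_fixp]

theorem CrRedex.isProgram {A B : Tm} (h : CrRedex A B) (hA : IsProgram A) : IsProgram B := by
  obtain ⟨hfv, hcs⟩ := hA
  cases h with
  | beta x M N σ hk =>
    simp only [closedSubs, closedSubs_applySubs] at hcs
    simp only [fv, fv_applySubs hcs.1.2, Finset.union_eq_empty] at hfv
    refine ⟨?_, closedSubs_applySubs.mpr hcs.1, hcs.2, hfv.2⟩
    simp only [fv, fv_applySubs hcs.1.2, hfv.2, Finset.union_empty]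
    exact (sdiff_right_comm _ _ _).trans hfv.1
  | pred_zero => exact ⟨rfl, trivial⟩
  | pred_succ n => exact ⟨fv_numeral n, closedSubs_numeral n⟩
  | _ => simp_all [IsProgram, fv, closedSubs]

theorem PrRedex.isProgram {A B : Tm} (h : PrRedex A B) (hA : IsProgram A) : IsProgram B := by
  obtain ⟨hfv, hcs⟩ := hA
  rcases h with ⟨x, N, σ, -, -, hx⟩ | ⟨x, σ, -, -, hx⟩ | _ | _ | _ | _ | _ | _ <;>
    obtain ⟨hcs, hσ⟩ := closedSubs_applySubs.mp hcs <;>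
    rw [fv_applySubs hσ] at hfv
  · exact hσ _ (mem_of_lookupS_eq_some hx)
  · simp [fv, lookupS_eq_none_iff.mp hx] at hfv
  · exact ⟨rfl, trivial⟩
  all_goals
    simp only [closedSubs] at hcs
    refine ⟨?_, ?_⟩
    · simp only [fv, fv_applySubs hσ] at hfv ⊢
      simp_all [Finset.union_sdiff_distrib]
    · simp only [closedSubs, closedSubs_applySubs]
      tauto

theorem WhStep.isProgram {M N : Tm} (h : WhStep M N) (hM : IsProgram M) : IsProgram N := by
  rcases h with ⟨E, A, B, hr, rfl, rfl⟩ | ⟨E, A, B, hr, rfl, rfl⟩ <;>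
    rw [isProgram_fill] at hM ⊢ <;> exact ⟨hM.1, hr.isProgram hM.2⟩

theorem CrStep.pcfStep_collapse_or_headClash {M N : Tm} (h : CrStep M N) :
    PcfStep (collapse M) (collapse N) ∨ HeadClash N := by
  obtain ⟨E, A, B, hr, rfl, rfl⟩ := h
  rw [headClash_fill]
  exact hr.pcfRedex_collapse_or_headClash.imp_left
    fun h => ⟨E.collapse, _, _, h, collapse_fill E A, collapse_fill E B⟩

theorem PrStep.collapse_eq {M N : Tm} (h : PrStep M N) (hM : closedSubs M) :
    collapse M = collapse N := by
  obtain ⟨E, A, B, hr, rfl, rfl⟩ := h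
  rw [collapse_fill, collapse_fill, hr.collapse_eq ((closedSubs_fill E A).mp hM).2]

/-- If an EPCF program weak-head reduces to a numeral, its collapse PCF-reduces
to the same numeral. -/
theorem stmt_6 (M : Tm) (n : ℕ) (hM : IsProgram M)
    (h : WhSteps M (numeral n)) : PcfSteps (collapse M) (numeral n) := by
  induction h using Relation.ReflTransGen.head_induction_on with
  | refl => rw [collapse_numeral]; exact .refl
  | head hstep hrest ih =>
    have hM' := hstep.isProgram hM
    rcases hstep with hcr | hpr
    · rcases hcr.pcfStep_collapse_or_headClash with hpcf | hclash
      · exact .head hpcf (ih hM')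
      · exact absurd hrest (hclash.not_whSteps_numeral n)
    · rw [hpr.collapse_eq hM.2]
      exact ih hM'
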